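/- arXiv:1108.1319 — 4 statements merged into one kernel-verified Lean document; each statement's English description precedes it below -/
import Mathlib

section
/- Let α₁,…,α_d be positive reals and set ᾱ = Σ_{k=1}^d 1/α_k. If 0 < r < ᾱ, then the integral over [0,1]^d of 1/(Σ_{k=1}^d |z_k|^{r·α_k}) dz is finite. -/
/-!
Put `A = ∑ₖ 1/αₖ` and `p = r/A < 1`. Weighted AM–GM with the weights `(1/αₖ)/A`, which sum to `1`
and turn `|zₖ|^(r αₖ)` into `|zₖ|^p`, gives `∏ₖ |zₖ|^p ≤ ∑ₖ |zₖ|^(r αₖ)`. Hence the integrand is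
dominated by `∏ₖ |zₖ|^(-p)`, a product of one-variable functions each integrable on `(0, 1]`
because `-p > -1`.
-/

open MeasureTheory Finset

theorem prod_abs_rpow_le_sum_abs_rpow {ι : Type*} [Fintype ι] [Nonempty ι] {α : ι → ℝ}
    (hα : ∀ k, 0 < α k) (r : ℝ) (x : ι → ℝ) :
    ∏ k, |x k| ^ (r / ∑ j, 1 / α j) ≤ ∑ k, |x k| ^ (r * α k) := by
  set A := ∑ j, 1 / α j
  have hA : 0 < A := sum_pos (fun j _ => one_div_pos.2 (hα j)) univ_nonempty
  set w : ι → ℝ := fun k => 1 / α k / A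
  have hw_nonneg : ∀ k, 0 ≤ w k := fun k => div_nonneg (one_div_pos.2 (hα k)).le hA.le
  have hw_le_one : ∀ k, w k ≤ 1 := fun k =>
    (div_le_one hA).2 (single_le_sum (fun j _ => (one_div_pos.2 (hα j)).le) (mem_univ k))
  have hw_sum : ∑ k, w k = 1 := by rw [← sum_div, div_self hA.ne']
  calc ∏ k, |x k| ^ (r / A)
      = ∏ k, (|x k| ^ (r * α k)) ^ w k := prod_congr rfl fun k _ => by
        rw [← Real.rpow_mul (abs_nonneg _)]
        congr 1
        simp only [w]
        field_simp [(hα k).ne']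
    _ ≤ ∑ k, w k * |x k| ^ (r * α k) :=
        Real.geom_mean_le_arith_mean_weighted _ _ _ (fun k _ => hw_nonneg k) hw_sum
          (fun k _ => by positivity)
    _ ≤ ∑ k, |x k| ^ (r * α k) :=
        sum_le_sum fun k _ => mul_le_of_le_one_left (by positivity) (hw_le_one k)

theorem inv_sum_abs_rpow_le_prod_abs_rpow_neg {ι : Type*} [Fintype ι] [Nonempty ι] {α : ι → ℝ}
    (hα : ∀ k, 0 < α k) (r : ℝ) {x : ι → ℝ} (hx : ∀ k, x k ≠ 0) :
    (∑ k, |x k| ^ (r * α k))⁻¹ ≤ ∏ k, |x k| ^ (-(r / ∑ j, 1 / α j)) := by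
  have hpos : 0 < ∏ k, |x k| ^ (r / ∑ j, 1 / α j) :=
    prod_pos fun k _ => Real.rpow_pos_of_pos (abs_pos.2 (hx k)) _
  simp_rw [Real.rpow_neg (abs_nonneg _), prod_inv_distrib]
  exact inv_anti₀ hpos (prod_abs_rpow_le_sum_abs_rpow hα r x)

theorem integrableOn_univ_pi_prod {ι 𝕜 E : Type*} [Fintype ι] [NormedCommRing 𝕜]
    [MeasurableSpace E] {μ : ι → Measure E} [∀ i, SigmaFinite (μ i)] {f : ι → E → 𝕜}
    {s : ι → Set E} (hf : ∀ i, IntegrableOn (f i) (s i) (μ i)) :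
    IntegrableOn (fun x : ι → E => ∏ i, f i (x i)) (Set.univ.pi s) (Measure.pi μ) := by
  rw [IntegrableOn, Measure.restrict_pi_pi]
  exact Integrable.fintype_prod hf

theorem integrableOn_Ioc_abs_rpow {p : ℝ} (hp : -1 < p) :
    IntegrableOn (fun x : ℝ => |x| ^ p) (Set.Ioc 0 1) :=
  (intervalIntegral.intervalIntegrable_rpow' hp).1.congr_fun
    (fun x hx => by simp only [abs_of_pos hx.1]) measurableSet_Ioc

theorem integrableOn_unitCube_inv_sum_abs_rpow
    (d : ℕ) (α : Fin d → ℝ) (hα : ∀ k, 0 < α k) (r : ℝ)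
    (hr : 0 < r) (hr' : r < ∑ k, 1 / α k) :
    IntegrableOn (fun z : Fin d → ℝ => (∑ k, |z k| ^ (r * α k))⁻¹)
      (Set.Icc (0 : Fin d → ℝ) 1) volume := by
  have hA : 0 < ∑ k, 1 / α k := hr.trans hr'
  have : Nonempty (Fin d) := univ_nonempty_iff.1 (nonempty_of_sum_ne_zero hA.ne')
  have hp : -1 < -(r / ∑ k, 1 / α k) := neg_lt_neg ((div_lt_one hA).2 hr')
  have hdom : IntegrableOn (fun z : Fin d → ℝ => ∏ k, |z k| ^ (-(r / ∑ j, 1 / α j)))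
      (Set.univ.pi fun _ => Set.Ioc 0 1) volume :=
    integrableOn_univ_pi_prod fun _ => integrableOn_Ioc_abs_rpow hp
  refine IntegrableOn.congr_set_ae ?_ Measure.univ_pi_Ioc_ae_eq_Icc.symm
  refine hdom.mono' (Measurable.aestronglyMeasurable (by fun_prop)) <|
    ae_restrict_of_forall_mem (MeasurableSet.univ_pi fun _ => measurableSet_Ioc) fun z hz => ?_
  rw [Real.norm_of_nonneg (by positivity)]
  exact inv_sum_abs_rpow_le_prod_abs_rpow_neg hα r fun k => (hz k (Set.mem_univ k)).1.ne'
end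

section
/- For any positive reals α₁,…,α_d with Σ_{k=1}^d 1/α_k = 2, the integral over ℝ^d of 1/(1 + Σ_{k=1}^d |y_k|^{α_k})^3 dy is finite. -/
/-!
Write `a_k = |y_k| ^ α_k` and `S = ∑ a_k`. Since `1 + a_k ≤ 1 + S`, for nonnegative weights `w_k`
with `∑ w_k ≤ 1` we get `(1 + S) ^ (-p) ≤ ∏ (1 + a_k) ^ (-p w_k)`. Taking `w_k = 1 / (q α_k)` with
`∑ 1 / α_k < q < p` makes every factor `(1 + |t| ^ α_k) ^ (-p / (q α_k)) ≈ |t| ^ (-p / q)` integrable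
on `ℝ`, so the product is integrable on `ℝ^ι` by Fubini. Here `∑ 1 / α_k = 2 < 3 = p`.
-/

open MeasureTheory

lemma one_add_rpow_le_two_rpow_mul {s α : ℝ} (hs : 0 ≤ s) (hα : 0 ≤ α) :
    (1 + s) ^ α ≤ 2 ^ α * (1 + s ^ α) := by
  have h2α : 0 ≤ (2 : ℝ) ^ α := by positivity
  have hsα : 0 ≤ s ^ α := by positivity
  rcases le_total s 1 with h | h
  · calc (1 + s) ^ α ≤ 2 ^ α := by gcongr; linarith
      _ ≤ 2 ^ α * (1 + s ^ α) := by nlinarith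
  · calc (1 + s) ^ α ≤ (2 * s) ^ α := by gcongr; linarith
      _ = 2 ^ α * s ^ α := Real.mul_rpow zero_le_two hs
      _ ≤ 2 ^ α * (1 + s ^ α) := by nlinarith

lemma one_add_abs_rpow_rpow_neg_le (t : ℝ) {α r : ℝ} (hα : 0 ≤ α) (hr : 0 ≤ r) :
    (1 + |t| ^ α) ^ (-r) ≤ 2 ^ (α * r) * (1 + |t|) ^ (-(α * r)) := by
  have h1 : 0 < 1 + |t| ^ α := by positivity
  calc (1 + |t| ^ α) ^ (-r) = 2 ^ (α * r) * (2 ^ α * (1 + |t| ^ α)) ^ (-r) := by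
        rw [Real.mul_rpow (by positivity) h1.le, ← Real.rpow_mul zero_le_two, ← mul_assoc,
          ← Real.rpow_add two_pos]
        simp
    _ ≤ 2 ^ (α * r) * ((1 + |t|) ^ α) ^ (-r) := by
        refine mul_le_mul_of_nonneg_left ?_ (by positivity)
        exact Real.rpow_le_rpow_of_nonpos (by positivity)
          (one_add_rpow_le_two_rpow_mul (abs_nonneg t) hα) (neg_nonpos.mpr hr)
    _ = 2 ^ (α * r) * (1 + |t|) ^ (-(α * r)) := by
        rw [← Real.rpow_mul (by positivity), mul_neg]

lemma integrable_one_add_abs_rpow_rpow_neg {α r : ℝ} (hα : 0 < α) (hr : 1 < α * r) :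
    Integrable (fun t : ℝ => (1 + |t| ^ α) ^ (-r)) := by
  have hr0 : 0 ≤ r := (pos_of_mul_pos_right (one_pos.trans hr) hα.le).le
  have hdom : Integrable (fun t : ℝ => 2 ^ (α * r) * (1 + ‖t‖) ^ (-(α * r))) :=
    (integrable_one_add_norm (by simpa using hr)).const_mul _
  refine hdom.mono' (by fun_prop : Measurable _).aestronglyMeasurable
    (Filter.Eventually.of_forall fun t => ?_)
  rw [Real.norm_of_nonneg (by positivity), Real.norm_eq_abs]
  exact one_add_abs_rpow_rpow_neg_le t hα.le hr0

lemma one_add_sum_rpow_neg_le_prod {ι : Type*} (s : Finset ι) {a w : ι → ℝ} {p : ℝ}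
    (ha : ∀ k ∈ s, 0 ≤ a k) (hw : ∀ k ∈ s, 0 ≤ w k) (hw1 : ∑ k ∈ s, w k ≤ 1) (hp : 0 ≤ p) :
    (1 + ∑ k ∈ s, a k) ^ (-p) ≤ ∏ k ∈ s, (1 + a k) ^ (-(p * w k)) := by
  have hS : 1 ≤ 1 + ∑ k ∈ s, a k := le_add_of_nonneg_right (Finset.sum_nonneg ha)
  calc (1 + ∑ k ∈ s, a k) ^ (-p) ≤ (1 + ∑ k ∈ s, a k) ^ ∑ k ∈ s, -(p * w k) := by
        refine Real.rpow_le_rpow_of_exponent_le hS ?_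
        rw [Finset.sum_neg_distrib, ← Finset.mul_sum]
        nlinarith
    _ = ∏ k ∈ s, (1 + ∑ k ∈ s, a k) ^ (-(p * w k)) := Real.rpow_sum_of_pos (by linarith) _ _
    _ ≤ ∏ k ∈ s, (1 + a k) ^ (-(p * w k)) := by
        refine Finset.prod_le_prod (fun k _ => by positivity) fun k hk => ?_
        have hak := ha k hk
        exact Real.rpow_le_rpow_of_nonpos (by linarith)
          (by linarith [Finset.single_le_sum ha hk]) (neg_nonpos.mpr (mul_nonneg hp (hw k hk)))

theorem integrable_one_add_sum_abs_rpow_rpow_neg {ι : Type*} [Fintype ι] {α : ι → ℝ}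
    (hα : ∀ k, 0 < α k) {p : ℝ} (hp : ∑ k, 1 / α k < p) :
    Integrable (fun y : ι → ℝ => (1 + ∑ k, |y k| ^ α k) ^ (-p)) := by
  obtain ⟨q, hsq, hqp⟩ := exists_between hp
  have hq : 0 < q :=
    (Finset.sum_nonneg fun k _ => (one_div_pos.mpr (hα k)).le).trans_lt hsq
  have hw1 : ∑ k, 1 / (q * α k) ≤ 1 := by
    have hw : ∑ k, 1 / (q * α k) = (∑ k, 1 / α k) / q := by
      rw [Finset.sum_div]
      refine Finset.sum_congr rfl fun k _ => ?_
      rw [mul_comm, ← div_div]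
    rw [hw, div_le_one hq]
    exact hsq.le
  have hfactor (k : ι) :
      Integrable (fun t : ℝ => (1 + |t| ^ α k) ^ (-(p * (1 / (q * α k))))) := by
    refine integrable_one_add_abs_rpow_rpow_neg (hα k) ?_
    have : α k * (p * (1 / (q * α k))) = p / q := by field_simp [(hα k).ne']
    rw [this, one_lt_div hq]
    exact hqp
  refine (Integrable.fintype_prod hfactor).mono'
    (by fun_prop : Measurable _).aestronglyMeasurable (Filter.Eventually.of_forall ?_)
  intro y
  rw [Real.norm_of_nonneg (by positivity)]
  exact one_add_sum_rpow_neg_le_prod _ (fun k _ => by positivity)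
    (fun k _ => (one_div_pos.mpr (mul_pos hq (hα k))).le) hw1 (by linarith)

theorem integrable_inv_one_add_sum_abs_rpow_cube
    (d : ℕ) (α : Fin d → ℝ) (hα : ∀ k, 0 < α k) (hsum : ∑ k, 1 / α k = 2) :
    Integrable (fun y : Fin d → ℝ => ((1 + ∑ k, |y k| ^ α k) ^ 3)⁻¹) volume := by
  refine (integrable_one_add_sum_abs_rpow_rpow_neg hα (p := 3) (by rw [hsum]; norm_num)).congr
    (Filter.Eventually.of_forall fun y => ?_)
  have hpos : 0 < 1 + ∑ k, |y k| ^ α k := by positivity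
  beta_reduce
  rw [Real.rpow_neg hpos.le, ← Real.rpow_natCast]
  norm_num
end

section
/- Let α₁,…,α_d > 0 with ᾱ := Σ_{k=1}^d 1/α_k < 3, and θ > 0. Then the triple integral ∫₀^∞ e^{-θu} ∫₀^∞ e^{-θv} ∫₀^{min(u,v)} e^{θs}/(u+v-2s)^{ᾱ} ds dv du is finite when 1 < ᾱ < 2. -/
/-!
Since `s ≤ (u + v) / 2`, the exponentials contribute at most `e^{-θu/2} e^{-θv/2}`, and
integrating `(u + v - 2s)^{-ᾱ}` over `0 < s ≤ min u v` gives at most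
`|u - v|^{1-ᾱ} / (2(ᾱ - 1))`. Because `-1 < 1 - ᾱ ≤ 0`, the kernel `|x|^{1-ᾱ}` is integrable
near `0` and bounded by `1` away from it, so its convolution with `e^{-θv/2}` is bounded
uniformly in `u`; what remains is the finite integral of `e^{-θu/2}`.
-/

open MeasureTheory Set

lemma lintegral_Ioc_sub_two_mul_rpow_neg_le {p c m : ℝ} (hp : 1 < p) (hm : 0 ≤ m)
    (hcm : 0 < c - 2 * m) :
    ∫⁻ s in Ioc 0 m, ENNReal.ofReal ((c - 2 * s) ^ (-p)) ≤
      ENNReal.ofReal (1 / (2 * (p - 1))) * ENNReal.ofReal ((c - 2 * m) ^ (1 - p)) := by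
  have hpos : ∀ s ∈ Icc 0 m, 0 < c - 2 * s := fun s hs => by linarith [hs.2]
  have hcont : ContinuousOn (fun s => (c - 2 * s) ^ (-p)) (Icc 0 m) :=
    (continuousOn_const.sub (continuousOn_const.mul continuousOn_id)).rpow_const
      fun s hs => Or.inl (hpos s hs).ne'
  have hnonneg : 0 ≤ᵐ[volume.restrict (Ioc 0 m)] fun s => (c - 2 * s) ^ (-p) :=
    (ae_restrict_mem measurableSet_Ioc).mono fun s hs =>
      Real.rpow_nonneg (hpos s (Ioc_subset_Icc_self hs)).le _
  rw [← ofReal_integral_eq_lintegral_ofReal (hcont.integrableOn_Icc.mono_set Ioc_subset_Icc_self)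
    hnonneg, ← intervalIntegral.integral_of_le hm,
    intervalIntegral.integral_comp_sub_mul (fun x => x ^ (-p)) two_ne_zero, integral_rpow,
    ← ENNReal.ofReal_mul (by positivity)]
  · apply ENNReal.ofReal_le_ofReal
    rw [neg_add_eq_sub, smul_eq_mul, mul_zero, sub_zero]
    have hc : 0 ≤ c ^ (1 - p) := Real.rpow_nonneg (by linarith) _
    calc 2⁻¹ * ((c ^ (1 - p) - (c - 2 * m) ^ (1 - p)) / (1 - p))
        = 1 / (2 * (p - 1)) * ((c - 2 * m) ^ (1 - p) - c ^ (1 - p)) := by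
          have : 1 - p ≠ 0 := by linarith
          have : p - 1 ≠ 0 := by linarith
          field_simp
          ring
      _ ≤ 1 / (2 * (p - 1)) * (c - 2 * m) ^ (1 - p) := by gcongr; linarith
  · refine Or.inr ⟨by linarith, ?_⟩
    rw [mul_zero, sub_zero, uIcc_of_le (by linarith)]
    exact fun h => by linarith [h.1]

lemma lintegral_Ioc_min_exp_div_rpow_le {p θ u v : ℝ} (hp : 1 < p) (hθ : 0 ≤ θ) (hu : 0 < u)
    (hv : 0 < v) (huv : u ≠ v) :
    ∫⁻ s in Ioc 0 (min u v), ENNReal.ofReal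
        (Real.exp (-θ * u) * Real.exp (-θ * v) * Real.exp (θ * s) / (u + v - 2 * s) ^ p) ≤
      ENNReal.ofReal (Real.exp (-(θ / 2) * u)) * ENNReal.ofReal (Real.exp (-(θ / 2) * v)) *
        (ENNReal.ofReal (1 / (2 * (p - 1))) * ENNReal.ofReal (|u - v| ^ (1 - p))) := by
  have habs : u + v - 2 * min u v = |u - v| := by
    rw [← min_add_max u v, abs_sub_comm, ← max_sub_min_eq_abs]
    ring
  have hgap : 0 < u + v - 2 * min u v := habs ▸ abs_pos.mpr (sub_ne_zero.mpr huv)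
  calc _ ≤ ∫⁻ s in Ioc 0 (min u v),
          ENNReal.ofReal (Real.exp (-(θ / 2) * u) * Real.exp (-(θ / 2) * v)) *
            ENNReal.ofReal ((u + v - 2 * s) ^ (-p)) := by
        refine setLIntegral_mono' measurableSet_Ioc fun s hs => ?_
        have hs₂ : 2 * s ≤ u + v := by linarith [hs.2, min_le_left u v, min_le_right u v]
        have hx : 0 < u + v - 2 * s := by linarith [hs.2]
        rw [← ENNReal.ofReal_mul (by positivity), Real.rpow_neg hx.le, ← div_eq_mul_inv]
        refine ENNReal.ofReal_le_ofReal (div_le_div_of_nonneg_right ?_ (by positivity))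
        simp only [← Real.exp_add]
        exact Real.exp_le_exp.mpr (by nlinarith)
    _ = ENNReal.ofReal (Real.exp (-(θ / 2) * u) * Real.exp (-(θ / 2) * v)) *
          ∫⁻ s in Ioc 0 (min u v), ENNReal.ofReal ((u + v - 2 * s) ^ (-p)) :=
        lintegral_const_mul' _ _ ENNReal.ofReal_ne_top
    _ ≤ _ := by
        rw [ENNReal.ofReal_mul (by positivity), ← habs]
        gcongr
        exact lintegral_Ioc_sub_two_mul_rpow_neg_le hp (le_min hu.le hv.le) hgap

lemma exists_setLIntegral_mul_abs_sub_rpow_le {q : ℝ} (hq₁ : -1 < q) (hq₀ : q ≤ 0) {s : Set ℝ}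
    (hs : MeasurableSet s) {w : ℝ → ENNReal} (hw₁ : ∀ v ∈ s, w v ≤ 1)
    (hw : ∫⁻ v in s, w v ≠ ⊤) :
    ∃ C ≠ ⊤, ∀ u, ∫⁻ v in s, w v * ENNReal.ofReal (|u - v| ^ q) ≤ C := by
  set k : ℝ → ENNReal := (Icc (-1) 1).indicator fun x => ENNReal.ofReal (|x| ^ q)
  have hk_meas : Measurable k := by
    refine Measurable.indicator ?_ measurableSet_Icc
    fun_prop
  have hk_fin : ∫⁻ x, k x ≠ ⊤ := by
    have hloc : LocallyIntegrable (fun x : ℝ => |x| ^ q) :=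
      locallyIntegrable_of_norm_le_rpow (C := 1) (α := -q) (by simp) (by simp; linarith)
        (ae_of_all _ fun x => by simp [abs_nonneg, Real.abs_rpow_of_nonneg])
        (measurable_abs.pow_const q).aestronglyMeasurable
    rw [lintegral_indicator measurableSet_Icc]
    exact (hloc.integrableOn_isCompact isCompact_Icc).setLIntegral_lt_top.ne
  have hk_le : ∀ x, ENNReal.ofReal (|x| ^ q) ≤ k x + 1 := by
    intro x
    by_cases hx : x ∈ Icc (-1) 1
    · simp only [k, indicator_of_mem hx]
      exact le_self_add
    · have : 1 ≤ |x| := by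
        rw [mem_Icc, ← abs_le] at hx
        linarith
      exact (ENNReal.ofReal_le_one.mpr (Real.rpow_le_one_of_one_le_of_nonpos this hq₀)).trans
        le_add_self
  refine ⟨(∫⁻ x, k x) + ∫⁻ v in s, w v, ENNReal.add_ne_top.mpr ⟨hk_fin, hw⟩, fun u => ?_⟩
  calc ∫⁻ v in s, w v * ENNReal.ofReal (|u - v| ^ q)
      ≤ ∫⁻ v in s, (k (u - v) + w v) := by
        refine setLIntegral_mono' hs fun v hv => ?_
        calc w v * ENNReal.ofReal (|u - v| ^ q) ≤ w v * (k (u - v) + 1) := by gcongr; exact hk_le _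
          _ = w v * k (u - v) + w v := by rw [mul_add, mul_one]
          _ ≤ k (u - v) + w v := by gcongr; exact mul_le_of_le_one_left' (hw₁ v hv)
    _ = (∫⁻ v in s, k (u - v)) + ∫⁻ v in s, w v :=
        lintegral_add_left (f := fun v => k (u - v))
          (hk_meas.comp (measurable_const.sub measurable_id)) _
    _ ≤ (∫⁻ x, k x) + ∫⁻ v in s, w v := by
        gcongr ?_ + _
        exact (setLIntegral_le_lintegral _ _).trans_eq (lintegral_sub_left_eq_self k u)

lemma exists_lintegral_Ioi_lintegral_Ioc_exp_div_rpow_le {p θ : ℝ} (hp₁ : 1 < p) (hp₂ : p < 2)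
    (hθ : 0 < θ) :
    ∃ C ≠ ⊤, ∀ u ∈ Ioi (0 : ℝ), ∫⁻ v in Ioi 0, ∫⁻ s in Ioc 0 (min u v), ENNReal.ofReal
        (Real.exp (-θ * u) * Real.exp (-θ * v) * Real.exp (θ * s) / (u + v - 2 * s) ^ p) ≤
      C * ENNReal.ofReal (Real.exp (-(θ / 2) * u)) := by
  set E : ℝ → ENNReal := fun x => ENNReal.ofReal (Real.exp (-(θ / 2) * x))
  have hE₁ : ∀ x ∈ Ioi (0 : ℝ), E x ≤ 1 := fun x hx =>
    ENNReal.ofReal_le_one.mpr (Real.exp_le_one_iff.mpr (by nlinarith [mem_Ioi.mp hx]))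
  obtain ⟨K, hK, hconv⟩ := exists_setLIntegral_mul_abs_sub_rpow_le (q := 1 - p)
    (by linarith) (by linarith) measurableSet_Ioi hE₁
    (exp_neg_integrableOn_Ioi 0 (half_pos hθ)).setLIntegral_lt_top.ne
  set c := ENNReal.ofReal (1 / (2 * (p - 1)))
  refine ⟨c * K, ENNReal.mul_ne_top ENNReal.ofReal_ne_top hK, fun u hu => ?_⟩
  calc _ ≤ ∫⁻ v in Ioi 0, c * E u * (E v * ENNReal.ofReal (|u - v| ^ (1 - p))) := by
        refine lintegral_mono_ae ?_
        filter_upwards [ae_restrict_mem measurableSet_Ioi,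
          ae_restrict_of_ae (Measure.ae_ne volume u)] with v hv hvu
        refine (lintegral_Ioc_min_exp_div_rpow_le hp₁ hθ.le hu hv hvu.symm).trans_eq ?_
        ring
    _ = c * E u * ∫⁻ v in Ioi 0, E v * ENNReal.ofReal (|u - v| ^ (1 - p)) :=
        lintegral_const_mul' _ _ (ENNReal.mul_ne_top ENNReal.ofReal_ne_top ENNReal.ofReal_ne_top)
    _ ≤ c * E u * K := by gcongr; exact hconv u
    _ = c * K * E u := by ring

theorem triple_integral_finite_intermediate_general
    (abar : ℝ)
    (h1 : 1 < abar) (h2 : abar < 2) (θ : ℝ) (hθ : 0 < θ) :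
    (∫⁻ u in Set.Ioi (0:ℝ), ∫⁻ v in Set.Ioi (0:ℝ), ∫⁻ s in Set.Ioc (0:ℝ) (min u v),
      ENNReal.ofReal (Real.exp (-θ * u) * Real.exp (-θ * v) * Real.exp (θ * s) /
        (u + v - 2 * s) ^ abar)) < ⊤ := by
  obtain ⟨C, hC, hbound⟩ := exists_lintegral_Ioi_lintegral_Ioc_exp_div_rpow_le h1 h2 hθ
  have hexp : ∫⁻ u in Ioi 0, ENNReal.ofReal (Real.exp (-(θ / 2) * u)) ≠ ⊤ :=
    (exp_neg_integrableOn_Ioi 0 (half_pos hθ)).setLIntegral_lt_top.ne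
  calc _ ≤ ∫⁻ u in Ioi 0, C * ENNReal.ofReal (Real.exp (-(θ / 2) * u)) :=
        setLIntegral_mono' measurableSet_Ioi hbound
    _ = C * ∫⁻ u in Ioi 0, ENNReal.ofReal (Real.exp (-(θ / 2) * u)) :=
        lintegral_const_mul' _ _ hC
    _ < ⊤ := ENNReal.mul_lt_top hC.lt_top hexp.lt_top

theorem triple_integral_finite_intermediate
    (d : ℕ) (α : Fin d → ℝ) (hα : ∀ k, 0 < α k)
    (abar : ℝ) (habar : abar = ∑ k, 1 / α k)
    (h1 : 1 < abar) (h2 : abar < 2) (θ : ℝ) (hθ : 0 < θ) :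
    (∫⁻ u in Set.Ioi (0:ℝ), ∫⁻ v in Set.Ioi (0:ℝ), ∫⁻ s in Set.Ioc (0:ℝ) (min u v),
      ENNReal.ofReal (Real.exp (-θ * u) * Real.exp (-θ * v) * Real.exp (θ * s) /
        (u + v - 2 * s) ^ abar)) < ⊤ :=
  triple_integral_finite_intermediate_general abar h1 h2 θ hθ
end

section
/- Let α₁,…,α_d > 0 with Σ 1/α_k = 2 and let g : ℝ^d → [0,∞) be bounded, continuous at 0, and integrable (playing the role of |φ̂|²). Define W̃(n) = ∫_{ℝ^d} g(z) (1 - e^{-n S(z)})² / (S(z)² ln n) dz where S(z) = Σ_{k=1}^d |z_k|^{α_k}. Then lim_{n→∞} W̃(n) = 2 g(0) ∫_{ℝ^d} e^{-S(z)}(1 - e^{-S(z)})/S(z) dz, and in particular this limit is finite. -/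
/-!
With `ψ(s) = e^{-s}(1 - e^{-s})/s` one has `(1 - e^{-tS})²/S² = ∫₀ᵗ 2mψ(mS) dm`, so by Fubini
`W̃(n) log n = ∫₀ⁿ h(m) dm` with `h(m) = ∫ g(z) 2mψ(mS(z)) dz`. The anisotropic substitution
`z = m^{-H} y`, `H = diag(1/α_k)`, has Jacobian `m^{-∑ 1/α_k} = m^{-2}` and turns `mS(z)` into
`S(y)`, so `m h(m) = 2 ∫ g(m^{-H} y) ψ(S(y)) dy → 2 g(0) ∫ ψ(S)` by dominated convergence.
Finally `m h(m) → L` forces `(∫₀ⁿ h)/log n → L`, the logarithmic form of L'Hôpital's rule.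
-/

open MeasureTheory Filter Real Set Topology

theorem integrable_exp_neg_abs_rpow {p : ℝ} (hp : 0 < p) :
    Integrable (fun x : ℝ => exp (-|x| ^ p)) := by
  have hcont : Continuous fun x : ℝ => exp (-|x| ^ p) :=
    (continuous_abs.rpow_const fun _ => Or.inr hp.le).neg.rexp
  refine hcont.locallyIntegrable.integrable_of_isBigO_atTop_of_norm_isNegInvariant
    (.of_forall fun x => by simp) (Asymptotics.isBigO_refl _ _) ⟨Ioi 0, Ioi_mem_atTop 0, ?_⟩
  have hIoi : IntegrableOn (fun x : ℝ => exp (-x ^ p)) (Ioi 0) := by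
    simpa using integrableOn_rpow_mul_exp_neg_rpow neg_one_lt_zero hp
  exact hIoi.congr_fun (fun x hx => by simp [abs_of_pos (mem_Ioi.mp hx)]) measurableSet_Ioi

-- `expKernel 0 = 0` by the convention `x / 0 = 0`, which makes the identities below hold
-- for all `m` and `s`.
noncomputable def expKernel (s : ℝ) : ℝ := exp (-s) * (1 - exp (-s)) / s

theorem expKernel_nonneg {s : ℝ} (hs : 0 ≤ s) : 0 ≤ expKernel s := by
  have : exp (-s) ≤ 1 := exp_le_one_iff.mpr (neg_nonpos.mpr hs)
  exact div_nonneg (mul_nonneg (exp_pos _).le (sub_nonneg.mpr this)) hs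

theorem expKernel_le_exp_neg {s : ℝ} (hs : 0 ≤ s) : expKernel s ≤ exp (-s) := by
  rcases hs.eq_or_lt with rfl | hs
  · simp [expKernel]
  · rw [expKernel, div_le_iff₀ hs]
    have := add_one_le_exp (-s)
    have := exp_pos (-s)
    nlinarith

@[fun_prop]
theorem measurable_expKernel : Measurable expKernel := by
  unfold expKernel; fun_prop

theorem two_mul_mul_expKernel_mul (m s : ℝ) :
    2 * m * expKernel (m * s) = 2 * exp (-(m * s)) * (1 - exp (-(m * s))) / s := by
  rcases eq_or_ne m 0 with rfl | hm
  · simp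
  rcases eq_or_ne s 0 with rfl | hs
  · simp [expKernel]
  rw [expKernel]
  field_simp

theorem norm_two_mul_mul_expKernel_mul_le {m s : ℝ} (hm : 0 ≤ m) (hs : 0 ≤ s) :
    ‖2 * m * expKernel (m * s)‖ ≤ 2 * m := by
  have hms := mul_nonneg hm hs
  have : expKernel (m * s) ≤ 1 :=
    (expKernel_le_exp_neg hms).trans (exp_le_one_iff.mpr (by linarith))
  rw [norm_of_nonneg (by have := expKernel_nonneg hms; positivity)]
  nlinarith

theorem integral_Ioc_two_mul_mul_expKernel_mul {t : ℝ} (ht : 0 ≤ t) (s : ℝ) :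
    ∫ m in Ioc 0 t, 2 * m * expKernel (m * s) = (1 - exp (-t * s)) ^ 2 / s ^ 2 := by
  rcases eq_or_ne s 0 with rfl | hs
  · simp [expKernel]
  have hderiv : ∀ m ∈ uIcc 0 t, HasDerivAt (fun m => (1 - exp (-m * s)) ^ 2 / s ^ 2)
      (2 * exp (-(m * s)) * (1 - exp (-(m * s))) / s) m := fun m _ => by
    have hlin : HasDerivAt (fun m : ℝ => -m * s) (-s) m := by
      simpa using (hasDerivAt_neg m).mul_const s
    refine (((hlin.exp.const_sub 1).pow 2).div_const (s ^ 2)).congr_deriv ?_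
    field_simp
    ring
  simp_rw [two_mul_mul_expKernel_mul, ← intervalIntegral.integral_of_le ht]
  rw [intervalIntegral.integral_eq_sub_of_hasDerivAt hderiv
    (by apply Continuous.intervalIntegrable; fun_prop)]
  simp

theorem integral_comp_linearMap {E F : Type*} [NormedAddCommGroup E] [NormedSpace ℝ E]
    [MeasurableSpace E] [BorelSpace E] [FiniteDimensional ℝ E] (μ : Measure E)
    [μ.IsAddHaarMeasure] [NormedAddCommGroup F] [NormedSpace ℝ F] {f : E →ₗ[ℝ] E}
    (hf : LinearMap.det f ≠ 0) (φ : E → F) :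
    ∫ x, φ (f x) ∂μ = |LinearMap.det f|⁻¹ • ∫ y, φ y ∂μ := by
  have hemb : MeasurableEmbedding f :=
    (f.equivOfDetNeZero hf).toContinuousLinearEquiv.toHomeomorph.measurableEmbedding
  rw [← hemb.integral_map, Measure.map_linearMap_addHaar_eq_smul_addHaar μ hf,
    integral_smul_measure, ENNReal.toReal_ofReal (by positivity), abs_inv]

section Anisotropic

variable {ι : Type*} [Fintype ι] {α : ι → ℝ}

noncomputable def anisoNorm (α : ι → ℝ) (z : ι → ℝ) : ℝ := ∑ k, |z k| ^ α k

theorem anisoNorm_nonneg (z : ι → ℝ) : 0 ≤ anisoNorm α z :=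
  Finset.sum_nonneg fun _ _ => rpow_nonneg (abs_nonneg _) _

theorem measurable_anisoNorm : Measurable (anisoNorm α) := by
  unfold anisoNorm; fun_prop

theorem integrable_exp_neg_anisoNorm (hα : ∀ k, 0 < α k) :
    Integrable fun z => exp (-anisoNorm α z) := by
  simp_rw [anisoNorm, ← Finset.sum_neg_distrib, exp_sum]
  exact Integrable.fintype_prod fun k => integrable_exp_neg_abs_rpow (hα k)

theorem integrable_expKernel_anisoNorm (hα : ∀ k, 0 < α k) :
    Integrable fun y => expKernel (anisoNorm α y) := by
  refine (integrable_exp_neg_anisoNorm hα).mono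
    (measurable_expKernel.comp measurable_anisoNorm).aestronglyMeasurable (.of_forall fun y => ?_)
  rw [norm_of_nonneg (expKernel_nonneg (anisoNorm_nonneg y)), norm_of_nonneg (exp_pos _).le]
  exact expKernel_le_exp_neg (anisoNorm_nonneg y)

variable [DecidableEq ι]

noncomputable def anisoScale (α : ι → ℝ) (m : ℝ) : (ι → ℝ) →ₗ[ℝ] (ι → ℝ) :=
  Matrix.toLin' (Matrix.diagonal fun k => m ^ (-(1 / α k)))

theorem anisoScale_apply (m : ℝ) (y : ι → ℝ) (k : ι) :
    anisoScale α m y k = m ^ (-(1 / α k)) * y k := by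
  simp [anisoScale, Matrix.mulVec_diagonal]

theorem det_anisoScale {m : ℝ} (hm : 0 < m) :
    LinearMap.det (anisoScale α m) = m ^ (-∑ k, 1 / α k) := by
  rw [anisoScale, LinearMap.det_toLin', Matrix.det_diagonal, ← Finset.sum_neg_distrib,
    rpow_sum_of_pos hm]

theorem anisoNorm_anisoScale (hα : ∀ k, α k ≠ 0) {m : ℝ} (hm : 0 < m) (y : ι → ℝ) :
    anisoNorm α (anisoScale α m y) = anisoNorm α y / m := by
  simp_rw [anisoNorm, Finset.sum_div, anisoScale_apply, abs_mul,
    abs_of_pos (rpow_pos_of_pos hm _), mul_rpow (rpow_nonneg hm.le _) (abs_nonneg _),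
    ← rpow_mul hm.le, neg_mul, one_div_mul_cancel (hα _), rpow_neg_one, inv_mul_eq_div]

theorem tendsto_anisoScale_atTop (hα : ∀ k, 0 < α k) (y : ι → ℝ) :
    Tendsto (fun m => anisoScale α m y) atTop (𝓝 0) := by
  refine tendsto_pi_nhds.mpr fun k => ?_
  simp_rw [anisoScale_apply]
  simpa using (tendsto_rpow_neg_atTop (one_div_pos.mpr (hα k))).mul_const (y k)

theorem integral_comp_anisoScale {m : ℝ} (hm : 0 < m) (φ : (ι → ℝ) → ℝ) :
    ∫ y, φ (anisoScale α m y) = m ^ (∑ k, 1 / α k) * ∫ z, φ z := by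
  have hdet := det_anisoScale (α := α) hm
  rw [integral_comp_linearMap volume (by rw [hdet]; positivity), hdet,
    abs_of_pos (by positivity), rpow_neg hm.le, inv_inv, smul_eq_mul]

theorem integral_mul_comp_mul_anisoNorm (hα : ∀ k, α k ≠ 0) {m : ℝ} (hm : 0 < m)
    (g : (ι → ℝ) → ℝ) (F : ℝ → ℝ) :
    ∫ z, g z * F (m * anisoNorm α z) =
      (m ^ (∑ k, 1 / α k))⁻¹ * ∫ y, g (anisoScale α m y) * F (anisoNorm α y) := by
  have h := integral_comp_anisoScale (α := α) hm fun z => g z * F (m * anisoNorm α z)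
  simp only [anisoNorm_anisoScale hα hm, mul_div_cancel₀ _ hm.ne'] at h
  rw [h, inv_mul_cancel_left₀ (by positivity)]

theorem mul_integral_mul_two_mul_expKernel (hα : ∀ k, α k ≠ 0) (hsum : ∑ k, 1 / α k = 2)
    {m : ℝ} (hm : 0 < m) (g : (ι → ℝ) → ℝ) :
    m * ∫ z, g z * (2 * m * expKernel (m * anisoNorm α z)) =
      2 * ∫ y, g (anisoScale α m y) * expKernel (anisoNorm α y) := by
  have h := integral_mul_comp_mul_anisoNorm hα hm g fun s => 2 * m * expKernel s
  rw [hsum, rpow_two] at h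
  simp_rw [h, mul_left_comm (g _) (2 * m), integral_const_mul]
  field_simp

theorem tendsto_integral_comp_anisoScale_mul (hα : ∀ k, 0 < α k) {g : (ι → ℝ) → ℝ} {C : ℝ}
    (hgC : ∀ z, ‖g z‖ ≤ C) (hgm : AEStronglyMeasurable g) (hgc : ContinuousAt g 0)
    {w : (ι → ℝ) → ℝ} (hw : Integrable w) :
    Tendsto (fun m => ∫ y, g (anisoScale α m y) * w y) atTop (𝓝 (g 0 * ∫ y, w y)) := by
  rw [← integral_const_mul]
  refine tendsto_integral_filter_of_dominated_convergence (fun y => C * ‖w y‖) ?_ ?_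
    (hw.norm.const_mul C) ?_
  · filter_upwards [eventually_gt_atTop 0] with m hm
    have hdet : LinearMap.det (anisoScale α m) ≠ 0 := by rw [det_anisoScale hm]; positivity
    exact (hgm.comp_quasiMeasurePreserving
      (Measure.LinearMap.quasiMeasurePreserving volume _ hdet)).mul hw.aestronglyMeasurable
  · exact .of_forall fun m => .of_forall fun y => by rw [norm_mul]; gcongr; exact hgC _
  · exact .of_forall fun y => (hgc.tendsto.comp (tendsto_anisoScale_atTop hα y)).mul_const _

end Anisotropic

section Fubini

variable {X : Type*} [MeasurableSpace X] {μ : Measure X} {g S : X → ℝ}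

theorem integrable_uncurry_mul_expKernel (hg : Integrable g μ) (hSm : Measurable S)
    (hS0 : ∀ z, 0 ≤ S z) (t : ℝ) :
    Integrable (Function.uncurry fun m z => g z * (2 * m * expKernel (m * S z)))
      ((volume.restrict (Ioc 0 t)).prod μ) := by
  have hdom : Integrable (fun p : ℝ × X => 2 * t * ‖g p.2‖)
      ((volume.restrict (Ioc 0 t)).prod μ) :=
    (integrable_const (2 * t)).mul_prod hg.norm
  refine hdom.mono' (hg.aestronglyMeasurable.comp_snd.mul ?_) ?_
  · exact Measurable.aestronglyMeasurable (by fun_prop)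
  · filter_upwards [Measure.quasiMeasurePreserving_fst.ae (ae_restrict_mem measurableSet_Ioc)]
      with p hp
    rw [Function.uncurry_apply_pair, norm_mul, mul_comm]
    gcongr
    exact (norm_two_mul_mul_expKernel_mul_le hp.1.le (hS0 _)).trans (by linarith [hp.2])

theorem integral_mul_one_sub_exp_sq_div_sq [SFinite μ] (hg : Integrable g μ) (hSm : Measurable S)
    (hS0 : ∀ z, 0 ≤ S z) {t : ℝ} (ht : 0 ≤ t) :
    ∫ z, g z * (1 - exp (-t * S z)) ^ 2 / S z ^ 2 ∂μ =
      ∫ m in Ioc 0 t, ∫ z, g z * (2 * m * expKernel (m * S z)) ∂μ := by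
  rw [integral_integral_swap (integrable_uncurry_mul_expKernel hg hSm hS0 t)]
  simp_rw [integral_const_mul, integral_Ioc_two_mul_mul_expKernel_mul ht, mul_div_assoc]

end Fubini

theorem abs_setIntegral_Ioc_sub_mul_log_le {h : ℝ → ℝ} {L δ a b : ℝ} (ha : 0 < a) (hab : a ≤ b)
    (hint : IntegrableOn h (Ioc a b)) (hδ : ∀ m ∈ Ioc a b, |m * h m - L| ≤ δ) :
    |(∫ m in Ioc a b, h m) - L * log (b / a)| ≤ δ * log (b / a) := by
  have hpos : ∀ m ∈ uIcc a b, 0 < m := fun m hm => ha.trans_le (by simpa [hab] using hm.1)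
  have hinv : IntervalIntegrable (fun m : ℝ => m⁻¹) volume a b :=
    intervalIntegral.intervalIntegrable_inv (fun m hm => (hpos m hm).ne') continuousOn_id
  have hlog : ∀ c : ℝ, c * log (b / a) = ∫ m in a..b, c * m⁻¹ := fun c => by
    rw [intervalIntegral.integral_const_mul, integral_inv_of_pos ha (ha.trans_le hab)]
  rw [hlog, hlog, ← intervalIntegral.integral_of_le (f := h) hab,
    ← intervalIntegral.integral_sub ((intervalIntegrable_iff_integrableOn_Ioc_of_le hab).2 hint)
      (hinv.const_mul L), ← norm_eq_abs]
  refine intervalIntegral.norm_integral_le_of_norm_le hab (ae_of_all _ fun m hm => ?_)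
    (hinv.const_mul δ)
  have hm0 : 0 < m := ha.trans hm.1
  rw [norm_eq_abs, show h m - L * m⁻¹ = (m * h m - L) / m by field_simp, abs_div,
    abs_of_pos hm0, div_eq_mul_inv]
  gcongr
  exact hδ m hm

theorem tendsto_setIntegral_Ioc_div_log {h : ℝ → ℝ} {L : ℝ}
    (hint : ∀ x, IntegrableOn h (Ioc 0 x)) (hlim : Tendsto (fun m => m * h m) atTop (𝓝 L)) :
    Tendsto (fun x => (∫ m in Ioc 0 x, h m) / log x) atTop (𝓝 L) := by
  have hlo : (fun x => (∫ m in Ioc 0 x, h m) - L * log x) =o[atTop] log := by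
    refine Asymptotics.isLittleO_iff.2 fun ε hε => ?_
    obtain ⟨M, hM⟩ := eventually_atTop.1
      ((Metric.tendsto_nhds.1 hlim (ε / 2) (half_pos hε)).and (eventually_ge_atTop 1))
    have hM1 : 1 ≤ M := (hM M le_rfl).2
    set c := (∫ m in Ioc 0 M, h m) - L * log M
    filter_upwards [eventually_ge_atTop M,
      tendsto_log_atTop.eventually_ge_atTop (2 * |c| / ε)] with x hxM hlogx
    have hM0 : 0 < M := one_pos.trans_le hM1
    have hsplit : ∫ m in Ioc 0 x, h m = (∫ m in Ioc 0 M, h m) + ∫ m in Ioc M x, h m := by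
      rw [← Ioc_union_Ioc_eq_Ioc hM0.le hxM, setIntegral_union (Ioc_disjoint_Ioc_of_le le_rfl)
        measurableSet_Ioc (hint M) ((hint x).mono_set (Ioc_subset_Ioc hM0.le le_rfl))]
    have htail := abs_setIntegral_Ioc_sub_mul_log_le hM0 hxM
      ((hint x).mono_set (Ioc_subset_Ioc hM0.le le_rfl))
      (fun m hm => ((hM m hm.1.le).1).le) (L := L)
    have hlogM : 0 ≤ log M := log_nonneg hM1
    rw [log_div (hM0.trans_le hxM).ne' hM0.ne'] at htail
    have hlogx0 : 0 ≤ log x := log_nonneg (hM1.trans hxM)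
    rw [norm_eq_abs, norm_eq_abs, abs_of_nonneg hlogx0, hsplit]
    calc |(∫ m in Ioc 0 M, h m) + (∫ m in Ioc M x, h m) - L * log x|
        = |c + ((∫ m in Ioc M x, h m) - L * (log x - log M))| := by congr 1; ring
      _ ≤ |c| + ε / 2 * (log x - log M) := (abs_add_le _ _).trans (by gcongr)
      _ ≤ ε * log x := by
        have := (div_le_iff₀ hε).1 hlogx
        nlinarith
  refine (hlo.tendsto_div_nhds_zero.add_const L).congr' ?_ |>.trans (by rw [zero_add])
  filter_upwards [eventually_gt_atTop 1] with x hx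
  have := (log_pos hx).ne'
  field_simp
  ring

theorem tendsto_Wtilde
    (d : ℕ) (α : Fin d → ℝ) (hα : ∀ k, 0 < α k) (hsum : ∑ k, 1 / α k = 2)
    (g : (Fin d → ℝ) → ℝ) (hg0 : ∀ z, 0 ≤ g z) (hgb : ∃ C, ∀ z, g z ≤ C)
    (hgc : ContinuousAt g 0) (hgi : Integrable g volume)
    (S : (Fin d → ℝ) → ℝ) (hS : ∀ z, S z = ∑ k, |z k| ^ α k) :
    Tendsto (fun n : ℕ =>
        ∫ z : Fin d → ℝ, g z * (1 - Real.exp (-(n : ℝ) * S z)) ^ 2 / (S z ^ 2 * Real.log n))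
      atTop
      (nhds (2 * g 0 * ∫ z : Fin d → ℝ, Real.exp (-S z) * (1 - Real.exp (-S z)) / S z)) := by
  obtain rfl : S = anisoNorm α := funext hS
  obtain ⟨C, hC⟩ := hgb
  have hgC : ∀ z, ‖g z‖ ≤ C := fun z => (norm_of_nonneg (hg0 z)).trans_le (hC z)
  set h : ℝ → ℝ := fun m => ∫ z, g z * (2 * m * expKernel (m * anisoNorm α z))
  have hW : ∀ n : ℕ, ∫ z, g z * (1 - exp (-(n : ℝ) * anisoNorm α z)) ^ 2 /
      (anisoNorm α z ^ 2 * log n) = (∫ m in Ioc 0 (n : ℝ), h m) / log n := fun n => by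
    simp_rw [← div_div, integral_div,
      integral_mul_one_sub_exp_sq_div_sq hgi measurable_anisoNorm anisoNorm_nonneg n.cast_nonneg]
    rfl
  have hint : ∀ x, IntegrableOn h (Ioc 0 x) := fun x =>
    (integrable_uncurry_mul_expKernel hgi measurable_anisoNorm anisoNorm_nonneg x).integral_prod_left
  have hlim : Tendsto (fun m => m * h m) atTop
      (𝓝 (2 * g 0 * ∫ y, expKernel (anisoNorm α y))) := by
    have hk := (tendsto_integral_comp_anisoScale_mul hα hgC hgi.aestronglyMeasurable hgc
      (integrable_expKernel_anisoNorm hα)).const_mul 2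
    rw [← mul_assoc] at hk
    refine hk.congr' ?_
    filter_upwards [eventually_gt_atTop 0] with m hm
    exact (mul_integral_mul_two_mul_expKernel (fun k => (hα k).ne') hsum hm g).symm
  exact ((tendsto_setIntegral_Ioc_div_log hint hlim).comp tendsto_natCast_atTop_atTop).congr
    fun n => (hW n).symm
end
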